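/- arXiv:2510.04042 — 3 statements merged into one kernel-verified Lean document; each statement's English description precedes it below -/
import Mathlib

section
/- Let the trawl set be A = {(s,y) ∈ ℝ² : s < 0, 0 < y < a(s)} with trawl function a : (−∞,0] → ℝ⁺ integrable, and A_h = A + (h,0). Then for h ≥ 0, Leb(A ∩ A_h) = ∫_{−∞}^{−h} a(s) ds, so the autocorrelation ρ(h) = Leb(A ∩ A_h)/Leb(A) equals 1 − (∫_{−h}^0 a(s) ds)/(∫_{−∞}^0 a(s) ds). -/
open MeasureTheory Set

/-! Since `a` is increasing, a point `(s, y)` of `A` lies in `A_h` exactly when `y < a (s - h)`,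
so `A ∩ A_h` is the translate by `(h, 0)` of the part of `A` above `s < -h`. Translation
invariance of Lebesgue measure and Cavalieri's principle give its area `∫_{-∞}^{-h} a`, and
splitting `∫_{-∞}^0 a` at `-h` gives the autocorrelation. -/

theorem volume_regionBetween_zero {f : ℝ → ℝ} {s : Set ℝ} (hs : MeasurableSet s)
    (hf : IntegrableOn f s) (hf_nonneg : ∀ x ∈ s, 0 ≤ f x) :
    volume (regionBetween (fun _ => 0) f s) = ENNReal.ofReal (∫ x in s, f x) := by
  rw [Measure.volume_eq_prod,
    volume_regionBetween_eq_integral integrableOn_zero hf hs hf_nonneg]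
  simp only [Pi.sub_apply, sub_zero]

theorem volume_image_shift_fst (h : ℝ) (S : Set (ℝ × ℝ)) :
    volume ((fun p : ℝ × ℝ => (p.1 + h, p.2)) '' S) = volume S := by
  have hshift : (fun p : ℝ × ℝ => (p.1 + h, p.2)) = (· + (h, 0)) := by
    ext p <;> simp
  rw [hshift, image_add_right, measure_preimage_add_right]

theorem regionBetween_Iio_inter_image_shift_fst {a : ℝ → ℝ} {t h : ℝ}
    (ha : MonotoneOn a (Iio t)) (hh : 0 ≤ h) :
    regionBetween (fun _ => 0) a (Iio t) ∩
        (fun p : ℝ × ℝ => (p.1 + h, p.2)) '' regionBetween (fun _ => 0) a (Iio t) =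
      (fun p : ℝ × ℝ => (p.1 + h, p.2)) '' regionBetween (fun _ => 0) a (Iio (t - h)) := by
  ext ⟨x, y⟩
  simp only [regionBetween, mem_inter_iff, mem_image, mem_ofPred_eq, mem_Iio, mem_Ioo,
    Prod.mk.injEq, Prod.exists]
  constructor
  · rintro ⟨⟨hx, hv0, -⟩, u, v, ⟨-, -, hv⟩, rfl, rfl⟩
    exact ⟨u, v, ⟨by linarith, hv0, hv⟩, rfl, rfl⟩
  · rintro ⟨u, v, ⟨hu, hv0, hv⟩, rfl, rfl⟩
    have hle : a u ≤ a (u + h) :=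
      ha (mem_Iio.mpr (by linarith)) (mem_Iio.mpr (by linarith)) (by linarith)
    exact ⟨⟨by linarith, hv0, hv.trans_le hle⟩, u, v, ⟨by linarith, hv0, hv⟩, rfl, rfl⟩

theorem integral_Iic_eq_integral_Iic_add_integral_Icc {f : ℝ → ℝ} {b c : ℝ} (hbc : b ≤ c)
    (hf : IntegrableOn f (Iic c)) :
    ∫ x in Iic c, f x = (∫ x in Iic b, f x) + ∫ x in Icc b c, f x := by
  rw [← sub_eq_iff_eq_add', intervalIntegral.integral_Iic_sub_Iic
    (hf.mono_set (Iic_subset_Iic.mpr hbc)) hf, intervalIntegral.integral_of_le hbc,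
    integral_Icc_eq_integral_Ioc]

theorem setIntegral_Iic_pos {f : ℝ → ℝ} {c : ℝ} (hf : IntegrableOn f (Iic c))
    (hf_pos : ∀ x ≤ c, 0 < f x) : 0 < ∫ x in Iic c, f x := by
  have hsupp : Function.support f ∩ Iic c = Iic c :=
    inter_eq_right.mpr fun x hx => (hf_pos x hx).ne'
  rw [setIntegral_pos_iff_support_of_nonneg_ae
    ((ae_restrict_iff' measurableSet_Iic).mpr (.of_forall fun x hx => (hf_pos x hx).le)) hf,
    hsupp, Real.volume_Iic]
  exact ENNReal.zero_lt_top

theorem stmt_5_general (a : ℝ → ℝ)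
    (ha_pos : ∀ s ≤ (0 : ℝ), 0 < a s) (ha_mono : MonotoneOn a (Set.Iic (0 : ℝ)))
    (ha_int : IntegrableOn a (Set.Iic (0 : ℝ)))
    (h : ℝ) (hh : 0 ≤ h)
    (A : Set (ℝ × ℝ)) (hA : A = {p : ℝ × ℝ | p.1 < 0 ∧ 0 < p.2 ∧ p.2 < a p.1})
    (Ah : Set (ℝ × ℝ)) (hAh : Ah = (fun p : ℝ × ℝ => (p.1 + h, p.2)) '' A) :
    volume (A ∩ Ah) = ENNReal.ofReal (∫ s in Set.Iic (-h), a s) ∧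
    (volume (A ∩ Ah)).toReal / (volume A).toReal
      = 1 - (∫ s in Set.Icc (-h) 0, a s) / (∫ s in Set.Iic (0 : ℝ), a s) := by
  have hA' : A = regionBetween (fun _ => 0) a (Iio 0) := hA
  have ha_nonneg : ∀ s ∈ Iic (0 : ℝ), 0 ≤ a s := fun s hs => (ha_pos s hs).le
  have htail_sub : Iic (-h) ⊆ Iic 0 := Iic_subset_Iic.mpr (neg_nonpos.mpr hh)
  have hvol_inter : volume (A ∩ Ah) = ENNReal.ofReal (∫ s in Iic (-h), a s) := by
    rw [hAh, hA', regionBetween_Iio_inter_image_shift_fst (ha_mono.mono Iio_subset_Iic_self) hh,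
      volume_image_shift_fst, zero_sub,
      volume_regionBetween_zero measurableSet_Iio
        (ha_int.mono_set (Iio_subset_Iic_self.trans htail_sub))
        (fun s hs => ha_nonneg s (htail_sub (Iio_subset_Iic_self hs))),
      setIntegral_congr_set Iio_ae_eq_Iic]
  have hvol : volume A = ENNReal.ofReal (∫ s in Iic 0, a s) := by
    rw [hA', volume_regionBetween_zero measurableSet_Iio (ha_int.mono_set Iio_subset_Iic_self)
      (fun s hs => ha_nonneg s (Iio_subset_Iic_self hs)), setIntegral_congr_set Iio_ae_eq_Iic]
  refine ⟨hvol_inter, ?_⟩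
  have hsplit := integral_Iic_eq_integral_Iic_add_integral_Icc (neg_nonpos.mpr hh) ha_int
  have htotal_pos := setIntegral_Iic_pos ha_int ha_pos
  have htail_nonneg : 0 ≤ ∫ s in Iic (-h), a s :=
    setIntegral_nonneg measurableSet_Iic fun s hs => ha_nonneg s (htail_sub hs)
  rw [hvol_inter, hvol, ENNReal.toReal_ofReal htail_nonneg, ENNReal.toReal_ofReal htotal_pos.le,
    eq_sub_iff_add_eq, ← add_div, ← hsplit, div_self htotal_pos.ne']

/-- Let the trawl set be `A = {(s,y) : s < 0, 0 < y < a(s)}` with trawl function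
`a : (−∞,0] → ℝ⁺` measurable, increasing and integrable, and let `A_h = A + (h,0)`.
Then for `h ≥ 0`, `Leb(A ∩ A_h) = ∫_{−∞}^{−h} a(s) ds`, so the autocorrelation
`ρ(h) = Leb(A ∩ A_h)/Leb(A)` equals `1 − (∫_{−h}^0 a)/(∫_{−∞}^0 a)`. -/
theorem stmt_5 (a : ℝ → ℝ) (ha_meas : Measurable a)
    (ha_pos : ∀ s ≤ (0 : ℝ), 0 < a s) (ha_mono : MonotoneOn a (Set.Iic (0 : ℝ)))
    (ha_int : IntegrableOn a (Set.Iic (0 : ℝ)))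
    (h : ℝ) (hh : 0 ≤ h)
    (A : Set (ℝ × ℝ)) (hA : A = {p : ℝ × ℝ | p.1 < 0 ∧ 0 < p.2 ∧ p.2 < a p.1})
    (Ah : Set (ℝ × ℝ)) (hAh : Ah = (fun p : ℝ × ℝ => (p.1 + h, p.2)) '' A) :
    volume (A ∩ Ah) = ENNReal.ofReal (∫ s in Set.Iic (-h), a s) ∧
    (volume (A ∩ Ah)).toReal / (volume A).toReal
      = 1 - (∫ s in Set.Icc (-h) 0, a s) / (∫ s in Set.Iic (0 : ℝ), a s) :=
  stmt_5_general a ha_pos ha_mono ha_int h hh A hA Ah hAh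
end

section
/- For the Inverse Gaussian trawl function a(s) = (1 − 2s/γ²)^{−1/2} exp(η(1 − √(1 − 2s/γ²))) for s ≤ 0 with γ, η > 0, the autocorrelation function is ρ(h) = exp(η(1 − √(1 + 2h/γ²))) for h ≥ 0. -/
/-!
The trawl function has the explicit primitive `(γ²/η) · exp(η(1 − √(1 − 2s/γ²)))`, which tends
to `0` as `s → −∞`. Hence `∫_{−∞}^{b} a = (γ²/η) · exp(η(1 − √(1 − 2b/γ²)))`, and in the ratio
defining `ρ(h)` the factor `γ²/η` cancels while the denominator's exponential is `exp 0 = 1`.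
-/

open MeasureTheory Real Set Filter Topology

theorem integral_Iic_of_hasDerivAt_of_nonneg' {g g' : ℝ → ℝ} {a l : ℝ}
    (hderiv : ∀ x ∈ Iic a, HasDerivAt g (g' x) x) (g'pos : ∀ x ∈ Iio a, 0 ≤ g' x)
    (hg : Tendsto g atBot (𝓝 l)) : ∫ x in Iic a, g' x = g a - l := by
  have hderiv_neg : ∀ x ∈ Ici (-a), HasDerivAt (fun x ↦ g (-x)) (-g' (-x)) x := fun x hx ↦ by
    simpa [Function.comp_def] using
      (hderiv (-x) (neg_le.mp (mem_Ici.mp hx))).comp x (hasDerivAt_neg x)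
  have hInt := integral_Ioi_of_hasDerivAt_of_nonpos' hderiv_neg
    (fun x hx ↦ neg_nonpos.mpr (g'pos (-x) (neg_lt.mp (mem_Ioi.mp hx))))
    (hg.comp tendsto_neg_atTop_atBot)
  rw [integral_neg, integral_comp_neg_Ioi, neg_neg] at hInt
  linarith

noncomputable section InverseGaussian

variable (γ η : ℝ)

def igKernel (s : ℝ) : ℝ := exp (η * (1 - √(1 - 2 * s / γ ^ 2)))

def igTrawl (s : ℝ) : ℝ := igKernel γ η s / √(1 - 2 * s / γ ^ 2)

variable {γ η}

theorem hasDerivAt_const_mul_igKernel (hγ : γ ≠ 0) (hη : η ≠ 0) {s : ℝ}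
    (hs : 0 < 1 - 2 * s / γ ^ 2) :
    HasDerivAt (fun s ↦ γ ^ 2 / η * igKernel γ η s) (igTrawl γ η s) s := by
  have hu : HasDerivAt (fun s : ℝ ↦ 1 - 2 * s / γ ^ 2) (-(2 / γ ^ 2)) s := by
    simpa using ((hasDerivAt_id s).const_mul 2 |>.div_const (γ ^ 2)).const_sub 1
  refine ((((hu.sqrt hs.ne').const_sub 1).const_mul η).exp.const_mul (γ ^ 2 / η)).congr_deriv ?_
  have : √(1 - 2 * s / γ ^ 2) ≠ 0 := (sqrt_pos.mpr hs).ne'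
  simp only [igTrawl, igKernel]
  field_simp

theorem tendsto_igKernel_atBot (hγ : γ ≠ 0) (hη : 0 < η) :
    Tendsto (igKernel γ η) atBot (𝓝 0) := by
  have hu : Tendsto (fun s : ℝ ↦ 1 - 2 * s / γ ^ 2) atBot atTop := by
    refine tendsto_atTop_add_const_left _ 1 ?_
    simpa [sub_eq_add_neg, neg_div] using
      (tendsto_neg_atBot_atTop.const_mul_atTop (two_pos : (0 : ℝ) < 2)).atTop_div_const
        (by positivity)
  refine tendsto_exp_atBot.comp <| Tendsto.const_mul_atBot hη ?_
  exact tendsto_atBot_add_const_left _ 1 (tendsto_neg_atTop_atBot.comp (tendsto_sqrt_atTop.comp hu))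

theorem integral_Iic_igTrawl (hγ : γ ≠ 0) (hη : 0 < η) {b : ℝ} (hb : 0 < 1 - 2 * b / γ ^ 2) :
    ∫ s in Iic b, igTrawl γ η s = γ ^ 2 / η * igKernel γ η b := by
  have hderiv : ∀ s ∈ Iic b, HasDerivAt (fun s ↦ γ ^ 2 / η * igKernel γ η s) (igTrawl γ η s) s :=
    fun s hs ↦ hasDerivAt_const_mul_igKernel hγ hη.ne' <| hb.trans_le <| by gcongr; exact hs
  have hlim := (tendsto_igKernel_atBot hγ hη).const_mul (γ ^ 2 / η)
  rw [mul_zero] at hlim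
  have hnonneg : ∀ s ∈ Iio b, 0 ≤ igTrawl γ η s := fun s _ ↦ by
    unfold igTrawl igKernel; positivity
  rw [integral_Iic_of_hasDerivAt_of_nonneg' hderiv hnonneg hlim, sub_zero]

end InverseGaussian

/-- For the Inverse Gaussian trawl function
`a(s) = (1 − 2s/γ²)^{−1/2} exp(η (1 − √(1 − 2s/γ²)))`, `s ≤ 0`, with `γ, η > 0`,
the autocorrelation function `ρ(h) = (∫_{−∞}^{−h} a)/(∫_{−∞}^0 a)` equals
`exp(η (1 − √(1 + 2h/γ²)))` for `h ≥ 0`. -/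
theorem stmt_7 (γ η : ℝ) (hγ : 0 < γ) (hη : 0 < η) (h : ℝ) (hh : 0 ≤ h) :
    (∫ s in Set.Iic (-h),
        Real.exp (η * (1 - Real.sqrt (1 - 2 * s / γ ^ 2))) / Real.sqrt (1 - 2 * s / γ ^ 2))
      / (∫ s in Set.Iic (0 : ℝ),
        Real.exp (η * (1 - Real.sqrt (1 - 2 * s / γ ^ 2))) / Real.sqrt (1 - 2 * s / γ ^ 2))
      = Real.exp (η * (1 - Real.sqrt (1 + 2 * h / γ ^ 2))) := by
  have hpos : ∀ c, 0 ≤ c → 0 < 1 - 2 * -c / γ ^ 2 := fun c hc ↦ by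
    rw [mul_neg, neg_div, sub_neg_eq_add]; positivity
  change (∫ s in Iic (-h), igTrawl γ η s) / (∫ s in Iic 0, igTrawl γ η s) = _
  rw [integral_Iic_igTrawl hγ.ne' hη (hpos h hh),
    ← neg_zero, integral_Iic_igTrawl hγ.ne' hη (hpos 0 le_rfl)]
  have : (γ ^ 2 / η) ≠ 0 := by positivity
  rw [mul_div_mul_left _ _ this]
  simp [igKernel, neg_div]
end

section
/- Let θ ~ p(θ), x | θ ~ p(x|θ), and suppose the posterior p(·|x) is known exactly. Define the rank statistic r(θ) = E_{ϑ ~ p(·|x)}[1(f(θ) < f(ϑ))] for a measurable f : Θ → ℝ such that f(ϑ) has a continuous distribution under the posterior for almost every x. Then r(θ) is uniformly distributed on [0,1] under the joint law p(x,θ). -/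
/-!
Fix `x` and let `ν` be the law of `f ϑ` under the posterior `p(·|x)`. The rank is
`G (f θ)` for the survival function `G t = ν (t, ∞)`. Since `ν` has no atoms, `G` is continuous
and, by the intermediate value theorem, takes every value in `(0, 1)`. As `G` is antitone, the
set `{G ≤ u}` contains `(t, ∞)` when `G t ≤ u` and is contained in it when `G t > u`; choosing
`t` with `G t` just below or just above `u` squeezes `ν {G ≤ u}` to `u`. So the rank is uniform
under each posterior, and integrating over the marginal of `x` gives the claim.
-/

open MeasureTheory ProbabilityTheory Set Filter

namespace ProbabilityTheory

theorem continuous_cdf (μ : Measure ℝ) [IsProbabilityMeasure μ] [NullSingletonClass μ] :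
    Continuous (cdf μ) := by
  refine continuous_iff_continuousAt.2 fun x => ?_
  have hleft : Function.leftLim (cdf μ) x = cdf μ x := by
    have h := (cdf μ).measure_singleton x
    rw [measure_cdf, measure_singleton, eq_comm, ENNReal.ofReal_eq_zero, sub_nonpos] at h
    exact le_antisymm ((monotone_cdf μ).leftLim_le le_rfl) h
  rw [(monotone_cdf μ).continuousAt_iff_leftLim_eq_rightLim, hleft, (cdf μ).rightLim_eq]

theorem Ioo_subset_range_measureReal_Ioi (μ : Measure ℝ) [IsProbabilityMeasure μ]
    [NullSingletonClass μ] : Ioo 0 1 ⊆ range fun t => μ.real (Ioi t) := by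
  rintro w ⟨hw0, hw1⟩
  obtain ⟨a, ha⟩ := ((tendsto_cdf_atBot μ).eventually (gt_mem_nhds (sub_pos.2 hw1))).exists
  obtain ⟨b, hb⟩ := ((tendsto_cdf_atTop μ).eventually (lt_mem_nhds (sub_lt_self 1 hw0))).exists
  obtain ⟨t, ht⟩ := intermediate_value_univ a b (continuous_cdf μ) ⟨ha.le, hb.le⟩
  refine ⟨t, ?_⟩
  simp only [← compl_Iic, probReal_compl_eq_one_sub measurableSet_Iic, ← cdf_eq_real, ht]
  ring

theorem measureReal_setOf_measureReal_Ioi_le {α : Type*} [LinearOrder α] [MeasurableSpace α]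
    {μ : Measure α} [IsProbabilityMeasure μ] (hrange : Ioo 0 1 ⊆ range fun t => μ.real (Ioi t))
    {u : ℝ} (hu : u ∈ Icc 0 1) : μ.real {t | μ.real (Ioi t) ≤ u} = u := by
  set A := {t | μ.real (Ioi t) ≤ u}
  have le_of_mem : ∀ t ∈ A, μ.real (Ioi t) ≤ μ.real A := fun t ht =>
    measureReal_mono fun s hs => (measureReal_mono (Ioi_subset_Ioi (le_of_lt hs))).trans ht
  have le_of_notMem : ∀ t ∉ A, μ.real A ≤ μ.real (Ioi t) := fun t ht =>
    measureReal_mono fun s hs => lt_of_not_ge fun hst =>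
      ht ((measureReal_mono (Ioi_subset_Ioi hst)).trans hs)
  apply le_antisymm
  · refine le_of_forall_gt_imp_ge_of_dense fun w huw => ?_
    rcases le_or_gt 1 w with hw1 | hw1
    · exact measureReal_le_one.trans hw1
    · obtain ⟨t, rfl⟩ := hrange ⟨hu.1.trans_lt huw, hw1⟩
      exact le_of_notMem t huw.not_ge
  · refine le_of_forall_lt_imp_le_of_dense fun w hwu => ?_
    rcases le_or_gt w 0 with hw0 | hw0
    · exact hw0.trans measureReal_nonneg
    · obtain ⟨t, rfl⟩ := hrange ⟨hw0, hwu.trans_le hu.2⟩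
      exact le_of_mem t hwu.le

theorem measure_setOf_rank_le {Θ : Type*} [MeasurableSpace Θ] (P : Measure Θ)
    [IsProbabilityMeasure P] {f : Θ → ℝ} (hf : Measurable f)
    (hatom : ∀ t, P {ϑ | f ϑ = t} = 0) {u : ℝ} (hu : u ∈ Icc 0 1) :
    P {θ | (P {ϑ | f θ < f ϑ}).toReal ≤ u} = ENNReal.ofReal u := by
  let ν := P.map f
  have : IsProbabilityMeasure ν := Measure.isProbabilityMeasure_map hf.aemeasurable
  have : NullSingletonClass ν :=
    ⟨fun t => by rw [Measure.map_apply hf (measurableSet_singleton t)]; exact hatom t⟩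
  have hA : MeasurableSet {t | ν.real (Ioi t) ≤ u} :=
    measurableSet_le (Antitone.measurable fun s t hst => measureReal_mono (Ioi_subset_Ioi hst))
      measurable_const
  have hpre : {θ | (P {ϑ | f θ < f ϑ}).toReal ≤ u} = f ⁻¹' {t | ν.real (Ioi t) ≤ u} := by
    ext θ
    simp only [mem_ofPred_eq, mem_preimage, measureReal_def, ν,
      Measure.map_apply hf measurableSet_Ioi]
    rfl
  rw [hpre, ← Measure.map_apply hf hA, ← ofReal_measureReal,
    measureReal_setOf_measureReal_Ioi_le (Ioo_subset_range_measureReal_Ioi ν) hu]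

theorem measurable_kernel_setOf_lt {X Θ : Type*} [MeasurableSpace X] [MeasurableSpace Θ]
    (κ : Kernel X Θ) [IsSFiniteKernel κ] {f : Θ → ℝ} (hf : Measurable f) :
    Measurable fun z : X × Θ => κ z.1 {ϑ | f z.2 < f ϑ} := by
  have hlt : MeasurableSet {p : (X × Θ) × Θ | f p.1.2 < f p.2} :=
    measurableSet_lt (hf.comp (measurable_snd.comp measurable_fst)) (hf.comp measurable_snd)
  exact Kernel.measurable_kernel_prodMk_left (κ := κ.comap Prod.fst measurable_fst) hlt

end ProbabilityTheory

/-- Let `θ ∼ p(θ)`, `x | θ ∼ p(x|θ)`, with exactly known posterior (given as a Markov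
kernel disintegrating the joint law). Define the rank statistic
`r(x,θ) = P_{ϑ ∼ p(·|x)}(f(θ) < f(ϑ))` for measurable `f : Θ → ℝ` such that `f(ϑ)` has a
continuous (atomless) distribution under the posterior for almost every `x`. Then `r` is
uniformly distributed on `[0,1]` under the joint law `p(x,θ)`:
`P(r ≤ u) = u` for every `u ∈ [0,1]`. -/
theorem stmt_10 {X Θ : Type*} [MeasurableSpace X] [MeasurableSpace Θ]
    (joint : Measure (X × Θ)) [IsProbabilityMeasure joint]
    (posterior : Kernel X Θ) [IsMarkovKernel posterior]
    (hdisint : joint = joint.fst ⊗ₘ posterior)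
    (f : Θ → ℝ) (hf : Measurable f)
    (hcont : ∀ᵐ x ∂joint.fst, ∀ t : ℝ, posterior x {ϑ | f ϑ = t} = 0) :
    ∀ u ∈ Set.Icc (0 : ℝ) 1,
      joint {z : X × Θ | ((posterior z.1) {ϑ | f z.2 < f ϑ}).toReal ≤ u}
        = ENNReal.ofReal u := by
  intro u hu
  have hS : MeasurableSet {z : X × Θ | ((posterior z.1) {ϑ | f z.2 < f ϑ}).toReal ≤ u} :=
    measurableSet_le (measurable_kernel_setOf_lt posterior hf).ennreal_toReal measurable_const
  have hfiber : ∀ᵐ x ∂joint.fst, posterior x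
      (Prod.mk x ⁻¹' {z | ((posterior z.1) {ϑ | f z.2 < f ϑ}).toReal ≤ u}) = ENNReal.ofReal u := by
    filter_upwards [hcont] with x hx
    exact measure_setOf_rank_le (posterior x) hf hx hu
  rw [hdisint, Measure.compProd_apply hS, lintegral_congr_ae hfiber, lintegral_const,
    measure_univ, mul_one]
end
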